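/- The multirelational diamond fails additivity: there exist a set X, a multirelation R, and subidentities P, Q such that ⟨R⟩(P ∪ Q) ≠ ⟨R⟩P ∪ ⟨R⟩Q. Concretely, R = {(a,{a,b})}, P = {(a,{a})}, Q = {(b,{b})} gives ⟨R⟩(P ∪ Q) = {(a,{a})} while ⟨R⟩P ∪ ⟨R⟩Q = ∅. -/

import Mathlib

open Set

/-- Sequential composition of multirelations (Peleg). -/
def mseq {X : Type*} (R S : Set (X × Set X)) : Set (X × Set X) :=
  {p | ∃ B, (p.1, B) ∈ R ∧ ∃ f : X → Set X, (∀ b ∈ B, (b, f b) ∈ S) ∧ p.2 = ⋃ b ∈ B, f b}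

/-- The unit of sequential composition. -/
def sunit (X : Type*) : Set (X × Set X) := {p | p.2 = {p.1}}

/-- Parallel (concurrent) composition of multirelations. -/
def mpar {X : Type*} (R S : Set (X × Set X)) : Set (X × Set X) :=
  {p | ∃ A B, (p.1, A) ∈ R ∧ (p.1, B) ∈ S ∧ p.2 = A ∪ B}

/-- The unit of parallel composition. -/
def punit (X : Type*) : Set (X × Set X) := {p | p.2 = (∅ : Set X)}

/-- Domain of a multirelation. -/
def mdom {X : Type*} (R : Set (X × Set X)) : Set (X × Set X) :=
  {p | p.2 = {p.1} ∧ ∃ A, (p.1, A) ∈ R}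

/-- Antidomain of a multirelation. -/
def mantidom {X : Type*} (R : Set (X × Set X)) : Set (X × Set X) :=
  {p | p.2 = {p.1} ∧ ¬ ∃ A, (p.1, A) ∈ R}

/-- Diamond operator. -/
def mdia {X : Type*} (R P : Set (X × Set X)) : Set (X × Set X) := mdom (mseq R P)

/-!
Whether `(a, {a})` lies in `⟨R⟩P` only asks that every element of some `R`-image of `a` have a
`P`-image; the union of those images is irrelevant. With `R = {(a, {a, b})}` both `a` and `b` need a
successor, which `P ∪ Q` provides but neither `P` (nothing at `b`) nor `Q` (nothing at `a`) does.
-/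

section

variable {X : Type*}

theorem exists_mem_mseq_iff {R S : Set (X × Set X)} {x : X} :
    (∃ A, (x, A) ∈ mseq R S) ↔ ∃ B, (x, B) ∈ R ∧ ∀ b ∈ B, ∃ C, (b, C) ∈ S := by
  constructor
  · rintro ⟨_, B, hB, f, hf, -⟩
    exact ⟨B, hB, fun b hb => ⟨f b, hf b hb⟩⟩
  · rintro ⟨B, hB, hS⟩
    choose! f hf using hS
    exact ⟨_, B, hB, f, hf, rfl⟩

theorem mem_mdia_iff {R S : Set (X × Set X)} {p : X × Set X} :
    p ∈ mdia R S ↔ p.2 = {p.1} ∧ ∃ B, (p.1, B) ∈ R ∧ ∀ b ∈ B, ∃ C, (b, C) ∈ S :=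
  and_congr_right fun _ => exists_mem_mseq_iff

theorem mdia_singleton_of_forall {a : X} {B : Set X} {S : Set (X × Set X)}
    (h : ∀ b ∈ B, ∃ C, (b, C) ∈ S) : mdia {(a, B)} S = {(a, {a})} := by
  ext ⟨x, A⟩
  simp only [mem_mdia_iff, mem_singleton_iff, Prod.mk.injEq]
  constructor
  · rintro ⟨hA, B', ⟨hx, -⟩, -⟩
    exact ⟨hx, hx ▸ hA⟩
  · rintro ⟨rfl, rfl⟩
    exact ⟨rfl, B, ⟨rfl, rfl⟩, h⟩

theorem mdia_singleton_of_exists_forall_notMem {a : X} {B : Set X} {S : Set (X × Set X)}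
    (h : ∃ b ∈ B, ∀ C, (b, C) ∉ S) : mdia {(a, B)} S = ∅ := by
  obtain ⟨b, hb, hbS⟩ := h
  refine eq_empty_of_forall_notMem fun p hp => ?_
  obtain ⟨-, B', hB', hS⟩ := mem_mdia_iff.mp hp
  obtain ⟨C, hC⟩ := hS b ((Prod.mk.inj hB').2 ▸ hb)
  exact hbS C hC

end

theorem stmt16 {X : Type*} (a b : X) (hab : a ≠ b) :
    mdia ({(a, ({a, b} : Set X))} : Set (X × Set X))
         (({(a, ({a} : Set X))} : Set (X × Set X)) ∪ {(b, ({b} : Set X))})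
      = ({(a, ({a} : Set X))} : Set (X × Set X)) ∧
    mdia ({(a, ({a, b} : Set X))} : Set (X × Set X)) {(a, ({a} : Set X))} ∪
    mdia ({(a, ({a, b} : Set X))} : Set (X × Set X)) {(b, ({b} : Set X))} = ∅ ∧
    mdia ({(a, ({a, b} : Set X))} : Set (X × Set X))
         (({(a, ({a} : Set X))} : Set (X × Set X)) ∪ {(b, ({b} : Set X))}) ≠
    mdia ({(a, ({a, b} : Set X))} : Set (X × Set X)) {(a, ({a} : Set X))} ∪
    mdia ({(a, ({a, b} : Set X))} : Set (X × Set X)) {(b, ({b} : Set X))} := by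
  have hsum : mdia ({(a, ({a, b} : Set X))} : Set (X × Set X))
      (({(a, ({a} : Set X))} : Set (X × Set X)) ∪ {(b, ({b} : Set X))}) = {(a, {a})} :=
    mdia_singleton_of_forall <| by
      rintro y (rfl | rfl)
      · exact ⟨{y}, Or.inl rfl⟩
      · exact ⟨{y}, Or.inr rfl⟩
  have hP : mdia ({(a, ({a, b} : Set X))} : Set (X × Set X)) {(a, ({a} : Set X))} = ∅ :=
    mdia_singleton_of_exists_forall_notMem ⟨b, Or.inr rfl, fun C h => hab (Prod.mk.inj h).1.symm⟩
  have hQ : mdia ({(a, ({a, b} : Set X))} : Set (X × Set X)) {(b, ({b} : Set X))} = ∅ :=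
    mdia_singleton_of_exists_forall_notMem ⟨a, Or.inl rfl, fun C h => hab (Prod.mk.inj h).1⟩
  rw [hsum, hP, hQ, union_empty]
  exact ⟨rfl, rfl, singleton_ne_empty _⟩
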